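/- Let (A, F) be an algebra all of whose proper subalgebras are Ramsey, and suppose there is a subalgebra universe A' with A' ∉ {∅, A} such that A \ A' is also a subalgebra universe. Then (A, F) is a Ramsey algebra. -/
import Mathlib


namespace RamseyAlg

/- Orderly-term syntax trees over an operation-index type `ι`:
`leaf` is the identity (a single variable), `node g f` applies the basic
operation `g` to the results of the trees in the forest `f`. -/
mutual
  inductive OTree (ι : Type) : Type
    | leaf : OTree ι
    | node : ι → OForest ι → OTree ι
  inductive OForest (ι : Type) : Type
    | nil : OForest ι
    | cons : OTree ι → OForest ι → OForest ι
end

def OForest.length {ι : Type} : OForest ι → ℕ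
  | .nil => 0
  | .cons _ f => f.length + 1

/- Well-formedness: each node applies a `k`-ary basic operation to exactly
`k` subtrees, where `ar` gives the arities. -/
mutual
  def OTree.WF {ι : Type} (ar : ι → ℕ) : OTree ι → Prop
    | .leaf => True
    | .node g f => OForest.length f = ar g ∧ OForest.WF ar f
  def OForest.WF {ι : Type} (ar : ι → ℕ) : OForest ι → Prop
    | .nil => True
    | .cons t f => OTree.WF ar t ∧ OForest.WF ar f
end

/- Evaluation of an orderly term on an input list: the variables of the term
consume an initial segment of the list, in order, each exactly once; what
remains of the list is returned alongside the value. -/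
mutual
  def OTree.evalAux {ι A : Type} (F : ι → List A → A) :
      OTree ι → List A → Option (A × List A)
    | .leaf, [] => none
    | .leaf, a :: rest => some (a, rest)
    | .node g f, l =>
      match OForest.evalAux F f l with
      | none => none
      | some (rs, rest) => some (F g rs, rest)
  def OForest.evalAux {ι A : Type} (F : ι → List A → A) :
      OForest ι → List A → Option (List A × List A)
    | .nil, l => some ([], l)
    | .cons t f, l =>
      match OTree.evalAux F t l with
      | none => none
      | some (r, rest) =>
        match OForest.evalAux F f rest with
        | none => none
        | some (rs, rest') => some (r :: rs, rest')
end

/- The value of the orderly term `t` on the finite sequence `l`, defined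
exactly when the variables of `t` consume all of `l`. -/
def OTree.eval {ι A : Type} (F : ι → List A → A) (t : OTree ι) (l : List A) :
    Option A :=
  match OTree.evalAux F t l with
  | some (a, []) => some a
  | _ => none

/- `Reduction ar F a b` : `a` is a reduction of `b` with respect to `F`, i.e.
there are well-formed orderly terms `t j` applied to consecutive disjoint
finite subsequences of `b` (extracted by the strictly monotone `e`, in blocks
of lengths `len j`) producing the terms of `a` in order. -/
def Reduction {ι A : Type} (ar : ι → ℕ) (F : ι → List A → A)
    (a b : ℕ → A) : Prop :=
  ∃ (t : ℕ → OTree ι) (len : ℕ → ℕ) (e : ℕ → ℕ),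
    StrictMono e ∧ (∀ j, (t j).WF ar) ∧
    ∀ j, (t j).eval F ((List.range (len j)).map
        (fun i => b (e ((∑ m ∈ Finset.range j, len m) + i)))) = some (a j)

/- `FR ar F b` : the set of values of orderly terms over `F` applied to
finite subsequences of `b`. -/
def FR {ι A : Type} (ar : ι → ℕ) (F : ι → List A → A) (b : ℕ → A) : Set A :=
  { x | ∃ (t : OTree ι) (l : List ℕ), t.WF ar ∧ l.Chain' (· < ·) ∧
      t.eval F (l.map b) = some x }

/- `(A, F)` is a Ramsey algebra: every infinite sequence has, for every
`X ⊆ A`, a reduction homogeneous for `X`. -/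
def RamseyAlgebra {ι A : Type} (ar : ι → ℕ) (F : ι → List A → A) : Prop :=
  ∀ (b : ℕ → A) (X : Set A), ∃ a : ℕ → A,
    Reduction ar F a b ∧ (FR ar F a ⊆ X ∨ FR ar F a ∩ X = ∅)

end RamseyAlg


open RamseyAlg in
/-- Let `(A, F)` be an algebra all of whose proper subalgebras are
Ramsey (sequences inside a proper closed subset admit homogeneous reductions), and
suppose some subalgebra universe `A' ∉ {∅, A}` has complement also a subalgebra
universe (i.e. `A'` is clopen in the subalgebra topology). Then `(A, F)` is Ramsey. -/
theorem stmt14 (ι A : Type) (ar : ι → ℕ) (F : ι → List A → A) (A' : Set A)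
    (hproper : ∀ S : Set A,
      (∀ i (l : List A), l.length = ar i → (∀ x ∈ l, x ∈ S) → F i l ∈ S) →
      S ≠ Set.univ →
      ∀ b : ℕ → A, (∀ n, b n ∈ S) → ∀ X : Set A,
        ∃ a : ℕ → A, Reduction ar F a b ∧ (FR ar F a ⊆ X ∨ FR ar F a ∩ X = ∅))
    (hA' : ∀ i (l : List A), l.length = ar i → (∀ x ∈ l, x ∈ A') → F i l ∈ A')
    (hne : A' ≠ ∅) (hnu : A' ≠ Set.univ)
    (hcompl : ∀ i (l : List A), l.length = ar i → (∀ x ∈ l, x ∈ A'ᶜ) → F i l ∈ A'ᶜ) :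
    RamseyAlgebra ar F := by
  have key : ∀ (b : ℕ → A) (e : ℕ → ℕ) (a : ℕ → A), StrictMono e →
      Reduction ar F a (fun n => b (e n)) → Reduction ar F a b := by
    intro b e a he ⟨t, len, e', he', hwf, heval⟩
    exact ⟨t, len, fun n => e (e' n), he.comp he', hwf, heval⟩
  intro b X
  rcases Set.finite_or_infinite {n | b n ∈ A'} with hfin | hinf
  · -- infinitely many terms in A'ᶜ
    have hinf' : {n | b n ∈ A'ᶜ}.Infinite := by
      have : {n | b n ∈ A'ᶜ} = {n | b n ∈ A'}ᶜ := by ext n; simp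
      rw [this]
      exact Set.Finite.infinite_compl hfin
    set e := Nat.nth (fun n => b n ∈ A'ᶜ) with he_def
    have he : StrictMono e := Nat.nth_strictMono hinf'
    have hmem : ∀ n, b (e n) ∈ A'ᶜ := fun n => Nat.nth_mem_of_infinite hinf' n
    have hnu' : A'ᶜ ≠ Set.univ := by
      intro h
      apply hne
      rw [← compl_compl A', h, Set.compl_univ]
    obtain ⟨a, hred, hhom⟩ := hproper A'ᶜ hcompl hnu' (fun n => b (e n)) hmem X
    exact ⟨a, key b e a he hred, hhom⟩
  · set e := Nat.nth (fun n => b n ∈ A') with he_def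
    have he : StrictMono e := Nat.nth_strictMono hinf
    have hmem : ∀ n, b (e n) ∈ A' := fun n => Nat.nth_mem_of_infinite hinf n
    obtain ⟨a, hred, hhom⟩ := hproper A' hA' hnu (fun n => b (e n)) hmem X
    exact ⟨a, key b e a he hred, hhom⟩
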